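/- Let K, D ∈ ℕ with K, D ≥ 1, let f : [0,1]^K → [0,1] be measurable, and let ε ∈ (0,1). Define B_{i,j} = ∫_{[0,1]^K} f(x)^{i+j} dx − (∫_{[0,1]^K} f(x)^i dx)(∫_{[0,1]^K} f(x)^j dx), [A_k]_{i,j} = ∫₀¹ F_{i,k}(t) F_{j,k}(t) dt − (∫_{[0,1]^K} f(x)^i dx)(∫_{[0,1]^K} f(x)^j dx) with F_{i,k}(t) = ∫_{[0,1]^{K−1}} f(x₁,…,x_{k−1}, t, x_{k+1},…,x_K)^i dx_{−k}, and A = Σ_{k=1}^K A_k. Assume B is positive definite and Z \ {0} is nonempty, where Z = {z ∈ ℝ^D : Mz ≥ 0 componentwise}. Then the following are equivalent: (i) there exist z ∈ Z \ {0} and c ∈ ℝ such that the skewed function φ_{z,c}(x) = Σ_{d=1}^D z_d f(x)^d + c satisfies Σ_{k=1}^K σ_k²(φ_{z,c}) ≥ (1−ε)·σ²(φ_{z,c}), i.e., φ_{z,c} is of effective superposition dimension 1 at level ε; (ii) max_{z ∈ Z \ {0}} (zᵀ A z)/(zᵀ B z) ≥ 1 − ε. -/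

import Mathlib

/-! On the probability space `[0,1]^K`, the total variance of `φ_{z,c} = ∑_d z_d f^d + c` is the
variance of a linear combination of the random variables `f^d`, hence `zᵀBz` with `B` their
covariance matrix. Since the coordinate measure is a probability measure, Fubini shows that the
`k`-th marginal of `φ_{z,c}` has mean `∫ φ_{z,c}`, so `σ_k²(φ_{z,c})` is the variance of
`∑_d z_d F_{d,k} + c` on `[0,1]`, which is `zᵀA_k z`. Both sides of the equivalence therefore say
`(1 - ε) zᵀBz ≤ zᵀAz` for some admissible `z`, and `zᵀBz > 0` lets one divide. -/

open MeasureTheory Matrix Finset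

/-- The lower-triangular matrix `M̃` with entries
`[M̃]_{i,j} = C(i-1, j-1) / C(D-1, j-1)` (here `0`-indexed: `C(i,j)/C(D-1,j)`). -/
noncomputable def Mtilde (D : ℕ) : Matrix (Fin D) (Fin D) ℝ :=
  Matrix.of fun i j : Fin D =>
    if (j : ℕ) ≤ (i : ℕ) then
      ((i : ℕ).choose (j : ℕ) : ℝ) / ((D - 1).choose (j : ℕ) : ℝ)
    else 0

/-- `M = M̃ ⬝ diag(1, 2, …, D)`. -/
noncomputable def Mmat (D : ℕ) : Matrix (Fin D) (Fin D) ℝ :=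
  Mtilde D * Matrix.diagonal fun d : Fin D => ((d : ℕ) : ℝ) + 1

/-- The unit cube `[0,1]^K`. -/
def box (K : ℕ) : Set (Fin K → ℝ) := Set.univ.pi fun _ => Set.Icc (0 : ℝ) 1

/-- The marginal of `h` in the `k`-th variable:
`t ↦ ∫_{[0,1]^{K-1}} h(x₁,…,x_{k-1}, t, x_{k+1},…,x_K) dx_{−k}`. -/
noncomputable def marg (K : ℕ) (h : (Fin K → ℝ) → ℝ) (k : Fin K) (t : ℝ) : ℝ :=
  ∫ x in box K, h (Function.update x k t)

/-- Total variance `σ²(h) = ∫_{[0,1]^K} h(x)² dx − (∫_{[0,1]^K} h(x) dx)²`. -/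
noncomputable def totalVar (K : ℕ) (h : (Fin K → ℝ) → ℝ) : ℝ :=
  (∫ x in box K, (h x) ^ 2) - (∫ x in box K, h x) ^ 2

/-- First-order ANOVA variance
`σ_k²(h) = ∫₀¹ (marginal of h at t − ∫ h)² dt`. -/
noncomputable def firstVar (K : ℕ) (h : (Fin K → ℝ) → ℝ) (k : Fin K) : ℝ :=
  ∫ t in Set.Icc (0 : ℝ) 1, (marg K h k t - ∫ x in box K, h x) ^ 2


open ProbabilityTheory

section UpdatePi

variable {ι α : Type*} [Fintype ι] [DecidableEq ι] [MeasurableSpace α]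
  (ν : Measure α) [IsProbabilityMeasure ν] (k : ι)

theorem measurePreserving_update_pi :
    MeasurePreserving (fun p : α × (ι → α) => Function.update p.2 k p.1)
      (ν.prod (Measure.pi fun _ => ν)) (Measure.pi fun _ => ν) := by
  refine ⟨by fun_prop, (Measure.pi_eq fun s hs => ?_).symm⟩
  have hpre : (fun p : α × (ι → α) => Function.update p.2 k p.1) ⁻¹' Set.univ.pi s
      = s k ×ˢ Set.univ.pi (Function.update s k Set.univ) := by
    ext ⟨t, x⟩
    simp only [Set.mem_preimage, Set.mem_prod, Set.mem_univ_pi, Function.update_apply]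
    grind
  rw [Measure.map_apply (by fun_prop) (.univ_pi hs), hpre, Measure.prod_prod, Measure.pi_pi,
    ← Finset.mul_prod_erase _ _ (Finset.mem_univ k),
    ← Finset.mul_prod_erase _ _ (Finset.mem_univ k), Function.update_self, measure_univ, one_mul]
  congr 1
  exact Finset.prod_congr rfl fun i hi => by rw [Function.update_of_ne (Finset.ne_of_mem_erase hi)]

theorem integral_integral_update_pi {g : (ι → α) → ℝ} (hg : Integrable g (Measure.pi fun _ => ν)) :
    ∫ t, ∫ x, g (Function.update x k t) ∂(Measure.pi fun _ => ν) ∂ν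
      = ∫ x, g x ∂(Measure.pi fun _ => ν) := by
  have hupd := measurePreserving_update_pi ν k
  have hprod := integral_prod _ (hupd.integrable_comp_of_integrable hg)
  simp only [Function.comp_apply] at hprod
  rw [← hprod, ← integral_map hupd.measurable.aemeasurable
    (by rw [hupd.map_eq]; exact hg.aestronglyMeasurable), hupd.map_eq]

end UpdatePi

theorem variance_sum_mul_add_const {Ω ι : Type*} [MeasurableSpace Ω] [Fintype ι] {μ : Measure Ω}
    [IsProbabilityMeasure μ] {X : ι → Ω → ℝ} (hX : ∀ i, MemLp (X i) 2 μ) (z : ι → ℝ) (c : ℝ) :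
    Var[fun ω => ∑ i, z i * X i ω + c; μ] = z ⬝ᵥ (of fun i j => cov[X i, X j; μ]) *ᵥ z := by
  have hzX : ∀ i, MemLp (fun ω => z i * X i ω) 2 μ := fun i => (hX i).const_mul (z i)
  have hsum := memLp_finsetSum Finset.univ fun i _ => hzX i
  rw [variance_add_const hsum.aestronglyMeasurable, ← covariance_self hsum.aemeasurable,
    covariance_fun_sum_fun_sum hzX hzX]
  simp only [covariance_const_mul_left, covariance_const_mul_right, dotProduct, mulVec,
    of_apply, Finset.mul_sum]
  exact Finset.sum_congr rfl fun i _ => Finset.sum_congr rfl fun j _ => by ring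

instance isProbabilityMeasure_restrict_Icc :
    IsProbabilityMeasure (volume.restrict (Set.Icc (0 : ℝ) 1)) := ⟨by simp⟩

theorem volume_restrict_box (K : ℕ) :
    volume.restrict (box K) = Measure.pi fun _ => volume.restrict (Set.Icc (0 : ℝ) 1) := by
  rw [volume_pi]
  exact Measure.restrict_pi_pi _ _

instance isProbabilityMeasure_restrict_box (K : ℕ) :
    IsProbabilityMeasure (volume.restrict (box K)) := by
  rw [volume_restrict_box]; infer_instance

section Marginal

variable {K : ℕ} {h : (Fin K → ℝ) → ℝ} (k : Fin K)

theorem marg_eq_integral_pi (t : ℝ) :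
    marg K h k t =
      ∫ x, h (Function.update x k t) ∂Measure.pi fun _ => volume.restrict (Set.Icc (0 : ℝ) 1) := by
  rw [marg, volume_restrict_box]

theorem measurable_marg (hh : Measurable h) : Measurable (marg K h k) := by
  rw [funext (marg_eq_integral_pi k)]
  exact (StronglyMeasurable.integral_prod_right'
    (f := fun p : ℝ × (Fin K → ℝ) => h (Function.update p.2 k p.1))
    (hh.comp (by fun_prop)).stronglyMeasurable).measurable

theorem norm_marg_le {C : ℝ} (hC : ∀ x, ‖h x‖ ≤ C) (t : ℝ) : ‖marg K h k t‖ ≤ C := by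
  simpa [marg] using norm_integral_le_of_norm_le_const
    (μ := volume.restrict (box K)) (ae_of_all _ fun x => hC (Function.update x k t))

theorem integral_marg (hh : Integrable h (volume.restrict (box K))) :
    ∫ t in Set.Icc (0 : ℝ) 1, marg K h k t = ∫ x in box K, h x := by
  simp_rw [marg_eq_integral_pi]
  rw [volume_restrict_box] at hh ⊢
  exact integral_integral_update_pi _ k hh

theorem marg_sum_mul_add_const {ι : Type*} [Fintype ι] {g : ι → (Fin K → ℝ) → ℝ}
    (hg : ∀ i, Measurable (g i)) {C : ℝ} (hC : ∀ i x, ‖g i x‖ ≤ C) (z : ι → ℝ) (c : ℝ) :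
    marg K (fun x => ∑ i, z i * g i x + c) k = fun t => ∑ i, z i * marg K (g i) k t + c := by
  funext t
  have hint : ∀ i, Integrable (fun x => z i * g i (Function.update x k t))
      (volume.restrict (box K)) := fun i =>
    (Integrable.of_bound ((hg i).comp measurable_update_left).aestronglyMeasurable C
      (ae_of_all _ fun x => hC i _)).const_mul (z i)
  rw [marg, integral_add (integrable_finsetSum _ fun i _ => hint i) (integrable_const c),
    integral_finsetSum _ fun i _ => hint i]
  simp [marg, integral_const_mul]

end Marginal

section Variances

variable {K : ℕ} {ι : Type*} [Fintype ι] {g : ι → (Fin K → ℝ) → ℝ}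

theorem totalVar_eq_variance {h : (Fin K → ℝ) → ℝ} (hh : MemLp h 2 (volume.restrict (box K))) :
    totalVar K h = Var[h; volume.restrict (box K)] := by
  rw [variance_eq_sub hh]
  rfl

theorem firstVar_eq_variance {h : (Fin K → ℝ) → ℝ} (k : Fin K) (hh : Measurable h)
    (hi : Integrable h (volume.restrict (box K))) :
    firstVar K h k = Var[marg K h k; volume.restrict (Set.Icc (0 : ℝ) 1)] := by
  rw [variance_eq_integral (measurable_marg k hh).aemeasurable, integral_marg k hi]
  rfl

theorem totalVar_sum_mul_add_const (hg : ∀ i, MemLp (g i) 2 (volume.restrict (box K)))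
    (z : ι → ℝ) (c : ℝ) :
    totalVar K (fun x => ∑ i, z i * g i x + c) =
      z ⬝ᵥ (of fun i j => (∫ x in box K, g i x * g j x) -
        (∫ x in box K, g i x) * (∫ x in box K, g j x)) *ᵥ z := by
  rw [totalVar_eq_variance (h := fun x => ∑ i, z i * g i x + c)
    ((memLp_finsetSum _ fun i _ => (hg i).const_mul (z i)).add (memLp_const c)),
    variance_sum_mul_add_const hg]
  congr
  ext i j
  exact covariance_eq_sub (hg i) (hg j)

theorem firstVar_sum_mul_add_const (k : Fin K) (hg : ∀ i, Measurable (g i)) {C : ℝ}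
    (hC : ∀ i x, ‖g i x‖ ≤ C) (z : ι → ℝ) (c : ℝ) :
    firstVar K (fun x => ∑ i, z i * g i x + c) k =
      z ⬝ᵥ (of fun i j => (∫ t in Set.Icc (0 : ℝ) 1, marg K (g i) k t * marg K (g j) k t) -
        (∫ x in box K, g i x) * (∫ x in box K, g j x)) *ᵥ z := by
  have hint : ∀ i, Integrable (g i) (volume.restrict (box K)) := fun i =>
    Integrable.of_bound (hg i).aestronglyMeasurable C (ae_of_all _ (hC i))
  have hmarg : ∀ i, MemLp (marg K (g i) k) 2 (volume.restrict (Set.Icc (0 : ℝ) 1)) := fun i =>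
    MemLp.of_bound (measurable_marg k (hg i)).aestronglyMeasurable C
      (ae_of_all _ (norm_marg_le k (hC i)))
  rw [firstVar_eq_variance (h := fun x => ∑ i, z i * g i x + c) k (by fun_prop)
    ((integrable_finsetSum _ fun i _ => (hint i).const_mul (z i)).add (integrable_const c)),
    marg_sum_mul_add_const k hg hC, variance_sum_mul_add_const hmarg]
  congr
  ext i j
  rw [covariance_eq_sub (hmarg i) (hmarg j), integral_marg k (hint i), integral_marg k (hint j)]
  rfl

end Variances

theorem effective_superposition_dim_one_iff_rayleigh_general (K D : ℕ)
    (f : (Fin K → ℝ) → ℝ) (hf : Measurable f)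
    (hf01 : ∀ x, f x ∈ Set.Icc (0 : ℝ) 1)
    (ε : ℝ)
    (B : Matrix (Fin D) (Fin D) ℝ)
    (hB : ∀ i j : Fin D, B i j =
      (∫ x in box K, f x ^ (((i : ℕ) + 1) + ((j : ℕ) + 1))) -
        (∫ x in box K, f x ^ ((i : ℕ) + 1)) * (∫ x in box K, f x ^ ((j : ℕ) + 1)))
    (Ak : Fin K → Matrix (Fin D) (Fin D) ℝ)
    (hAk : ∀ (k : Fin K) (i j : Fin D), Ak k i j =
      (∫ t in Set.Icc (0 : ℝ) 1,
          marg K (fun x => f x ^ ((i : ℕ) + 1)) k t *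
            marg K (fun x => f x ^ ((j : ℕ) + 1)) k t) -
        (∫ x in box K, f x ^ ((i : ℕ) + 1)) * (∫ x in box K, f x ^ ((j : ℕ) + 1)))
    (A : Matrix (Fin D) (Fin D) ℝ) (hA : A = ∑ k : Fin K, Ak k)
    (hBpd : B.PosDef) :
    ((∃ (z : Fin D → ℝ) (c : ℝ), z ≠ 0 ∧ (∀ i : Fin D, 0 ≤ (Mmat D).mulVec z i) ∧
        (1 - ε) * totalVar K (fun x => (∑ d : Fin D, z d * f x ^ ((d : ℕ) + 1)) + c)
          ≤ ∑ k : Fin K,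
              firstVar K (fun x => (∑ d : Fin D, z d * f x ^ ((d : ℕ) + 1)) + c) k) ↔
      (∃ z : Fin D → ℝ, z ≠ 0 ∧ (∀ i : Fin D, 0 ≤ (Mmat D).mulVec z i) ∧
        1 - ε ≤ (z ⬝ᵥ A.mulVec z) / (z ⬝ᵥ B.mulVec z))) := by
  have hpow : ∀ (d : Fin D), Measurable fun x => f x ^ ((d : ℕ) + 1) := fun d => hf.pow_const _
  have hpow_le : ∀ (d : Fin D) x, ‖f x ^ ((d : ℕ) + 1)‖ ≤ 1 := fun d x => by
    rw [norm_pow, Real.norm_of_nonneg (hf01 x).1]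
    exact pow_le_one₀ (hf01 x).1 (hf01 x).2
  have hTV : ∀ z c, totalVar K (fun x => (∑ d : Fin D, z d * f x ^ ((d : ℕ) + 1)) + c)
      = z ⬝ᵥ B *ᵥ z := fun z c => by
    rw [totalVar_sum_mul_add_const (fun d => MemLp.of_bound (hpow d).aestronglyMeasurable 1
      (ae_of_all _ (hpow_le d))) z c]
    congr
    ext i j
    simp only [hB, of_apply, pow_add]
  have hFV : ∀ z c, ∑ k : Fin K,
      firstVar K (fun x => (∑ d : Fin D, z d * f x ^ ((d : ℕ) + 1)) + c) k = z ⬝ᵥ A *ᵥ z :=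
    fun z c => by
    simp only [firstVar_sum_mul_add_const _ hpow hpow_le, hA, sum_mulVec, dotProduct_sum]
    refine Finset.sum_congr rfl fun k _ => ?_
    congr
    ext i j
    exact (hAk k i j).symm
  have hBz : ∀ z : Fin D → ℝ, z ≠ 0 → 0 < z ⬝ᵥ B *ᵥ z := fun z hz => hBpd.dotProduct_mulVec_pos hz
  constructor
  · rintro ⟨z, c, hz, hZ, hvar⟩
    exact ⟨z, hz, hZ, (le_div_iff₀ (hBz z hz)).2 (by rwa [hTV, hFV] at hvar)⟩
  · rintro ⟨z, hz, hZ, hq⟩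
    exact ⟨z, 0, hz, hZ, by rw [hTV, hFV]; exact (le_div_iff₀ (hBz z hz)).1 hq⟩

/-- There exists a skewing polynomial `g ∈ V(z,c)` (i.e. `z ∈ Z \ {0}`, `c ∈ ℝ`)
making `φ_{z,c} = g ∘ f` of effective superposition dimension `1` at level `ε`
if and only if the maximum of the cone-constrained Rayleigh quotient
`zᵀAz / zᵀBz` over `Z \ {0}` is at least `1 − ε`. -/
theorem effective_superposition_dim_one_iff_rayleigh (K D : ℕ)
    (hK : 1 ≤ K) (hD : 1 ≤ D)
    (f : (Fin K → ℝ) → ℝ) (hf : Measurable f)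
    (hf01 : ∀ x, f x ∈ Set.Icc (0 : ℝ) 1)
    (ε : ℝ) (hε : ε ∈ Set.Ioo (0 : ℝ) 1)
    (B : Matrix (Fin D) (Fin D) ℝ)
    (hB : ∀ i j : Fin D, B i j =
      (∫ x in box K, f x ^ (((i : ℕ) + 1) + ((j : ℕ) + 1))) -
        (∫ x in box K, f x ^ ((i : ℕ) + 1)) * (∫ x in box K, f x ^ ((j : ℕ) + 1)))
    (Ak : Fin K → Matrix (Fin D) (Fin D) ℝ)
    (hAk : ∀ (k : Fin K) (i j : Fin D), Ak k i j =
      (∫ t in Set.Icc (0 : ℝ) 1,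
          marg K (fun x => f x ^ ((i : ℕ) + 1)) k t *
            marg K (fun x => f x ^ ((j : ℕ) + 1)) k t) -
        (∫ x in box K, f x ^ ((i : ℕ) + 1)) * (∫ x in box K, f x ^ ((j : ℕ) + 1)))
    (A : Matrix (Fin D) (Fin D) ℝ) (hA : A = ∑ k : Fin K, Ak k)
    (hBpd : B.PosDef)
    (hne : ∃ z : Fin D → ℝ, z ≠ 0 ∧ ∀ i : Fin D, 0 ≤ (Mmat D).mulVec z i) :
    ((∃ (z : Fin D → ℝ) (c : ℝ), z ≠ 0 ∧ (∀ i : Fin D, 0 ≤ (Mmat D).mulVec z i) ∧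
        (1 - ε) * totalVar K (fun x => (∑ d : Fin D, z d * f x ^ ((d : ℕ) + 1)) + c)
          ≤ ∑ k : Fin K,
              firstVar K (fun x => (∑ d : Fin D, z d * f x ^ ((d : ℕ) + 1)) + c) k) ↔
      (∃ z : Fin D → ℝ, z ≠ 0 ∧ (∀ i : Fin D, 0 ≤ (Mmat D).mulVec z i) ∧
        1 - ε ≤ (z ⬝ᵥ A.mulVec z) / (z ⬝ᵥ B.mulVec z))) :=
  effective_superposition_dim_one_iff_rayleigh_general K D f hf hf01 ε B hB Ak hAk A hA hBpd
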